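/- Let k be a field of characteristic p > 0 and p ≤ m ≤ 2p−2. Let e be the operator on the (m+1)-dimensional space V_m with basis v_0,…,v_m defined by e·v_i = (i+1)v_{i+1} for i < m and e·v_m = 0. Then e^p = 0 and the Jordan type of e is [p] + [m+1−p], i.e., e has exactly two Jordan blocks, of sizes p and m+1−p. -/

import Mathlib

/-- The operator `e` on the `(m+1)`-dimensional space `V_m` with basis
`v_0, …, v_m`, defined by `e ⬝ v_i = (i+1) v_{i+1}` for `i < m` and
`e ⬝ v_m = 0`.  In coordinates, the `v_i`-component of `e ⬝ w` is `i · w_{i−1}`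
(which vanishes for `i = 0`). -/
def eOp (k : Type*) [Field k] (m : ℕ) : Module.End k (Fin (m + 1) → k) where
  toFun w := fun i => ((i : ℕ) : k) * w ⟨(i : ℕ) - 1, by have := i.isLt; omega⟩
  map_add' a b := by funext i; simp; ring
  map_smul' c a := by funext i; simp; ring

/-!
In coordinates, the `i`-th coordinate of `e^j w` is the descending factorial `i (i-1) ⋯ (i-j+1)`
times the coordinate `i - j` of `w`: `e^j` is a weighted shift. The
kernel of a weighted shift is cut out by the coordinates that receive a nonzero weight, so its
dimension is `m + 1` minus the number of nonzero weights. Since `i ≤ m < 2p`, the only possible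
multiples of `p` among the factors are `0` and `p`, so the weight at `i` vanishes in `k` exactly
when `i < j` or `p ≤ i < p + j`. Counting the remaining `i ∈ [j, p) ∪ [p + j, m + 1)` gives the
kernel dimensions `min j p + min j (m + 1 - p)`, and `j = p` gives `e^p = 0`.
-/

open Module LinearMap Finset

namespace Nat

theorem Prime.dvd_descFactorial_iff_of_lt_two_mul {p i j : ℕ} (hp : p.Prime) (hi : i < 2 * p) :
    p ∣ i.descFactorial j ↔ i < j ∨ p ≤ i ∧ i < p + j := by
  rw [descFactorial_eq_prod_range, hp.prime.dvd_finsetProd_iff]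
  constructor
  · rintro ⟨t, ht, c, hc⟩
    rw [mem_range] at ht
    have hc2 : c < 2 := by
      by_contra! h
      have := Nat.mul_le_mul_left p h
      omega
    interval_cases c <;> omega
  · rintro (h | h)
    · exact ⟨i, mem_range.2 h, by simp⟩
    · exact ⟨i - p, mem_range.2 (by omega), by rw [Nat.sub_sub_self h.1]⟩

theorem card_filter_range_not_dvd_descFactorial {p n : ℕ} (hp : p.Prime) (hpn : p ≤ n)
    (hn : n ≤ 2 * p) (j : ℕ) :
    #{i ∈ range n | ¬ p ∣ i.descFactorial j} = (p - j) + (n - (p + j)) := by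
  have : {i ∈ range n | ¬ p ∣ i.descFactorial j} = Ico j p ∪ Ico (p + j) n := by
    ext i
    simp only [mem_filter, mem_range, mem_union, mem_Ico]
    constructor
    · rintro ⟨hi, h⟩
      rw [hp.dvd_descFactorial_iff_of_lt_two_mul (by omega)] at h
      omega
    · rintro h
      refine ⟨by omega, ?_⟩
      rw [hp.dvd_descFactorial_iff_of_lt_two_mul (by omega)]
      omega
  rw [this, card_union_of_disjoint (disjoint_left.2 fun i hi hi' => by simp at hi hi'; omega),
    Nat.card_Ico, Nat.card_Ico]

end Nat

theorem Fin.card_filter_univ_eq_card_filter_range {n : ℕ} (P : ℕ → Prop) [DecidablePred P] :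
    #{i : Fin n | P i} = #{i ∈ range n | P i} := by
  rw [← card_map Fin.valEmbedding, ← Nat.Iio_eq_range, ← Fin.map_valEmbedding_univ, filter_map]
  rfl

theorem Module.finrank_iInf_ker_proj {K ι : Type*} [Field K] [Fintype ι] (s : Finset ι) :
    finrank K (⨅ i ∈ s, ker (proj i : (ι → K) →ₗ[K] K) : Submodule K (ι → K)) =
      Fintype.card ι - #s := by
  classical
  have h := (iInfKerProjEquiv K (fun _ => K) (disjoint_compl_left (a := (s : Set ι)))
    (by simp)).finrank_eq
  simp only [finrank_fintype_fun_eq_card, Fintype.card_compl_set, Finset.coe_sort_coe,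
    Fintype.card_coe] at h
  exact h

section WeightedShift

variable {K : Type*} [Field K]

/-- The subtraction `i - j` truncates, so for `i < j` the value is `c i * w 0`. -/
def weightedShift (n : ℕ) (c : ℕ → K) (j : ℕ) : Module.End K (Fin n → K) where
  toFun w i := c i * w ⟨i - j, by omega⟩
  map_add' v w := by funext i; simp only [Pi.add_apply]; ring
  map_smul' a w := by funext i; simp only [Pi.smul_apply, smul_eq_mul, RingHom.id_apply]; ring

variable {n : ℕ} {c d : ℕ → K} {j l : ℕ}

@[simp]
theorem weightedShift_apply (w : Fin n → K) (i : Fin n) :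
    weightedShift n c j w i = c i * w ⟨i - j, by omega⟩ :=
  rfl

theorem weightedShift_mul :
    weightedShift n c j * weightedShift n d l =
      weightedShift n (fun i => c i * d (i - j)) (j + l) := by
  ext w i
  simp [Nat.sub_add_eq, mul_assoc]

theorem weightedShift_eq_zero (hc : ∀ i < n, c i = 0) : weightedShift n c j = 0 := by
  ext w i
  simp [hc i i.isLt]

theorem ker_weightedShift [DecidableEq K] :
    ker (weightedShift n c j) =
      ⨅ l ∈ ({i | c i ≠ 0} : Finset (Fin n)).image fun i : Fin n => (⟨i - j, by omega⟩ : Fin n),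
        ker (proj l) := by
  ext w
  simp only [mem_ker, Submodule.mem_iInf, mem_image, mem_filter_univ, proj_apply]
  constructor
  · rintro hw _ ⟨i, hi, rfl⟩
    simpa [hi] using congrFun hw i
  · intro hw
    funext i
    by_cases hi : c i = 0
    · simp [hi]
    · simp [hw _ ⟨i, hi, rfl⟩]

theorem finrank_ker_weightedShift [DecidableEq K] (hc : ∀ i < j, c i = 0) :
    finrank K (ker (weightedShift n c j)) = n - #{i ∈ range n | c i ≠ 0} := by
  have hinj : Set.InjOn (fun i : Fin n => (⟨i - j, by omega⟩ : Fin n)) {i | c i ≠ 0} := by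
    intro a ha b hb hab
    have ha' : j ≤ a := not_lt.1 fun h => ha (hc a h)
    have hb' : j ≤ b := not_lt.1 fun h => hb (hc b h)
    simp only [Fin.mk.injEq] at hab
    ext; omega
  rw [ker_weightedShift, finrank_iInf_ker_proj, Fintype.card_fin, card_image_of_injOn (by simpa),
    Fin.card_filter_univ_eq_card_filter_range fun i => c i ≠ 0]

end WeightedShift

theorem eOp_eq_weightedShift (k : Type*) [Field k] (m : ℕ) :
    eOp k m = weightedShift (m + 1) (fun i => (i : k)) 1 :=
  rfl

theorem eOp_pow_eq_weightedShift (k : Type*) [Field k] (m j : ℕ) :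
    eOp k m ^ j = weightedShift (m + 1) (fun i => (i.descFactorial j : k)) j := by
  induction j with
  | zero => ext; simp
  | succ j ih =>
    rw [pow_succ, ih, eOp_eq_weightedShift, weightedShift_mul]
    congr 1
    funext i
    push_cast [Nat.descFactorial_succ]
    ring

/-- For `p ≤ m ≤ 2p−2`, `e^p = 0` and the Jordan type of `e` is
`[p] + [m+1−p]`, encoded by the dimensions of the kernels of all powers of
`e`: two Jordan blocks, of sizes `p` and `m+1−p`. -/
theorem stmt16 {k : Type*} [Field k] {p : ℕ} [Fact p.Prime] [CharP k p]
    (m : ℕ) (hm1 : p ≤ m) (hm2 : m ≤ 2 * p - 2) :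
    eOp k m ^ p = 0 ∧
      ∀ j : ℕ, Module.finrank k ↥(LinearMap.ker (eOp k m ^ j)) =
        min j p + min j (m + 1 - p) := by
  have hp : p.Prime := Fact.out
  have hp2 := hp.two_le
  refine ⟨?_, fun j => ?_⟩
  · rw [eOp_pow_eq_weightedShift]
    refine weightedShift_eq_zero fun i hi => ?_
    rw [CharP.cast_eq_zero_iff k p, hp.dvd_descFactorial_iff_of_lt_two_mul (by omega)]
    omega
  · classical
    rw [eOp_pow_eq_weightedShift, finrank_ker_weightedShift fun i hi => by
      rw [Nat.descFactorial_eq_zero_iff_lt.2 hi, Nat.cast_zero]]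
    simp only [ne_eq, CharP.cast_eq_zero_iff k p]
    rw [Nat.card_filter_range_not_dvd_descFactorial hp (by omega) (by omega)]
    omega
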